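/- arXiv:1703.02907 — 5 statements merged into one kernel-verified Lean document; each statement's English description precedes it below -/
import Mathlib

section
/- Let n ≥ 1, p ≥ 1, s* ∈ {2,…,⌊p/e⌋} and M := ⌊log₂(s*)⌋. The function w(b) := √((b/n)·log(p/b)) satisfies Assumption 1: (i) w is increasing on the real interval [1, s*]; (ii) there exists a constant C' > 0 (independent of n, p, s*) such that Σ_{k=1}^m w(2^k) ≤ C'·w(2^m) for all m ∈ {1,…,M}; (iii) w(2b) ≤ √2·w(b) for all integers b ∈ {1,…,s*}. -/
noncomputable section

/-- The weight function `w(b) = √((b/n)·log(p/b))`. -/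
def wPred (n p : ℕ) (b : ℝ) : ℝ := Real.sqrt ((b / n) * Real.log (p / b))

/-! With `g(x) = x log(p/x)` we have `w² = g/n`. The bound `log t ≤ t - 1` shows that `g`
increases as long as `log(p/x) ≥ 1`, i.e. on `(0, p/e]`. If `2x·e ≤ p`, then `L = log(p/2x) ≥ 1`,
so `w(x)² = (x/n)(L + log 2) ≤ ((1 + log 2)/2)·(2x/n)·L = r² w(2x)²` with
`r² = (1 + log 2)/2 < 1`; hence `w(2^k) ≤ r^(m-k) w(2^m)` and the dyadic sum is at most
`w(2^m)/(1 - r)`. -/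

open Real Finset

theorem monotoneOn_mul_log_div (c : ℝ) :
    MonotoneOn (fun x ↦ x * log (c / x)) (Set.Ioc 0 (c / exp 1)) := by
  rintro x ⟨hx, -⟩ y ⟨hy, hyc⟩ hxy
  have hc : 0 < c := (div_pos_iff_of_pos_right (exp_pos 1)).1 (hy.trans_le hyc)
  have hlog_cy : 1 ≤ log (c / y) := by
    rw [← log_exp 1]
    refine log_le_log (exp_pos 1) ?_
    rwa [le_div_iff₀ hy, mul_comm, ← le_div_iff₀ (exp_pos 1)]
  have hsplit : log (c / x) = log (c / y) + log (y / x) := by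
    rw [← log_mul (by positivity) (by positivity)]
    field_simp
  have hlog_yx : x * log (y / x) ≤ y - x := by
    have := log_le_sub_one_of_pos (div_pos hy hx)
    rw [div_sub_one hx.ne'] at this
    calc x * log (y / x) ≤ x * ((y - x) / x) := mul_le_mul_of_nonneg_left this hx.le
      _ = y - x := by field_simp
  -- `y log(c/y) - x log(c/x) = (y - x) log(c/y) - x log(y/x)`, and `log(c/y) ≥ 1`.
  simp only [hsplit]
  nlinarith [mul_le_mul_of_nonneg_left hlog_cy (sub_nonneg.2 hxy)]

theorem wPred_eq (n p : ℕ) (b : ℝ) : wPred n p b = √(b * log (p / b) / n) := by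
  rw [wPred, div_mul_eq_mul_div]

theorem wPred_monotoneOn (n p : ℕ) : MonotoneOn (wPred n p) (Set.Ioc 0 (p / exp 1)) := by
  intro x hx y hy hxy
  simp only [wPred_eq]
  exact sqrt_le_sqrt <|
    div_le_div_of_nonneg_right (monotoneOn_mul_log_div p hx hy hxy) n.cast_nonneg

theorem wPred_two_mul_le (n : ℕ) {p : ℕ} (hp : 0 < p) {b : ℝ} (hb : 0 < b) :
    wPred n p (2 * b) ≤ √2 * wPred n p b := by
  have hlog : log (p / (2 * b)) ≤ log (p / b) :=
    log_le_log (by positivity) (div_le_div_of_nonneg_left (by positivity) hb (by linarith))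
  rw [wPred, wPred, ← sqrt_mul zero_le_two]
  apply sqrt_le_sqrt
  calc 2 * b / n * log (p / (2 * b)) ≤ 2 * b / n * log (p / b) := by gcongr
    _ = 2 * (b / n * log (p / b)) := by ring

theorem wPred_le_mul_wPred_two_mul (n p : ℕ) {x : ℝ} (hx : 0 < x) (hxp : 2 * x * exp 1 ≤ p) :
    wPred n p x ≤ √((1 + log 2) / 2) * wPred n p (2 * x) := by
  have hp : 0 < (p : ℝ) := lt_of_lt_of_le (by positivity) hxp
  set L := log (p / (2 * x))
  have hL : 1 ≤ L := by
    rw [← log_exp 1]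
    exact log_le_log (exp_pos 1) (by rwa [le_div_iff₀ (by positivity), mul_comm])
  have hsplit : log (p / x) = L + log 2 := by
    rw [← log_mul (by positivity) two_ne_zero]
    field_simp
  rw [wPred, wPred, ← sqrt_mul (by positivity), hsplit]
  apply sqrt_le_sqrt
  have key : 0 ≤ x / n * log 2 * (L - 1) :=
    mul_nonneg (mul_nonneg (by positivity) (log_nonneg one_le_two)) (sub_nonneg.2 hL)
  calc x / n * (L + log 2) ≤ x / n * (L + log 2) + x / n * log 2 * (L - 1) := by linarith
    _ = (1 + log 2) / 2 * (2 * x / n * L) := by ring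

theorem sum_Icc_le_geom_sum_mul {a : ℕ → ℝ} {r : ℝ} (hr : 0 ≤ r) {m : ℕ}
    (ha : ∀ k < m, a k ≤ r * a (k + 1)) :
    ∑ k ∈ Icc 1 m, a k ≤ (∑ i ∈ range m, r ^ i) * a m := by
  induction m with
  | zero => simp
  | succ m ih =>
    specialize ih fun k hk ↦ ha k (by omega)
    have hG : 0 ≤ ∑ i ∈ range m, r ^ i := sum_nonneg fun i _ ↦ pow_nonneg hr i
    rw [sum_Icc_succ_top (by omega), geom_sum_succ]
    calc ∑ k ∈ Icc 1 m, a k + a (m + 1)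
        ≤ (∑ i ∈ range m, r ^ i) * (r * a (m + 1)) + a (m + 1) := by
          gcongr
          exact ih.trans (mul_le_mul_of_nonneg_left (ha m (by omega)) hG)
      _ = (r * ∑ i ∈ range m, r ^ i + 1) * a (m + 1) := by ring

theorem geom_sum_le_inv_one_sub {r : ℝ} (hr0 : 0 ≤ r) (hr1 : r < 1) (m : ℕ) :
    ∑ i ∈ range m, r ^ i ≤ (1 - r)⁻¹ := by
  have := geom_sum_Ico_le_of_lt_one (m := 0) (n := m) hr0 hr1
  rwa [← range_eq_Ico, pow_zero, one_div] at this

theorem sqrt_one_add_log_two_div_two_lt_one : √((1 + log 2) / 2) < 1 := by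
  rw [sqrt_lt' one_pos]
  linarith [log_two_lt_d9]

/-- Lemma 1 for `w(b) = √((b/n)·log(p/b))`: it satisfies Assumption 1. -/
theorem assumption_w_prediction_weight :
    ∃ C' : ℝ, 0 < C' ∧
    ∀ (n p sstar : ℕ), 1 ≤ n → 1 ≤ p → 2 ≤ sstar → (sstar : ℝ) * Real.exp 1 ≤ p →
    MonotoneOn (wPred n p) (Set.Icc (1 : ℝ) (sstar : ℝ)) ∧
    (∀ m : ℕ, 1 ≤ m → m ≤ Nat.log 2 sstar →
      ∑ k ∈ Finset.Icc 1 m, wPred n p ((2 : ℝ) ^ k) ≤ C' * wPred n p ((2 : ℝ) ^ m)) ∧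
    (∀ b : ℕ, 1 ≤ b → b ≤ sstar →
      wPred n p (2 * (b : ℝ)) ≤ Real.sqrt 2 * wPred n p (b : ℝ)) := by
  set r := √((1 + log 2) / 2)
  have hr1 : r < 1 := sqrt_one_add_log_two_div_two_lt_one
  refine ⟨(1 - r)⁻¹, inv_pos.2 (sub_pos.2 hr1),
    fun n p sstar _ hp hs hsp ↦ ⟨?_, ?_, ?_⟩⟩
  · refine (wPred_monotoneOn n p).mono fun x hx ↦ ⟨by linarith [hx.1], ?_⟩
    rw [le_div_iff₀ (exp_pos 1)]
    nlinarith [hx.2, exp_pos 1]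
  · intro m _ hm
    have hstep : ∀ k < m, wPred n p (2 ^ k) ≤ r * wPred n p (2 ^ (k + 1)) := by
      intro k hk
      have : (2 : ℝ) ^ (k + 1) ≤ sstar := by
        exact_mod_cast
          (Nat.pow_le_pow_right two_pos (by omega)).trans (Nat.pow_log_le_self 2 (by omega))
      rw [pow_succ'] at this ⊢
      exact wPred_le_mul_wPred_two_mul n p (by positivity) (by nlinarith [exp_pos 1])
    calc ∑ k ∈ Icc 1 m, wPred n p (2 ^ k)
        ≤ (∑ i ∈ range m, r ^ i) * wPred n p (2 ^ m) :=
          sum_Icc_le_geom_sum_mul (sqrt_nonneg _) hstep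
      _ ≤ (1 - r)⁻¹ * wPred n p (2 ^ m) :=
          mul_le_mul_of_nonneg_right (geom_sum_le_inv_one_sub (sqrt_nonneg _) hr1 m) (sqrt_nonneg _)
  · intro b hb _
    exact wPred_two_mul_le n hp (by exact_mod_cast hb)

end
end

section
/- Let n ≥ 1, p ≥ 1, s* ∈ {2,…,⌊p/e⌋}, M := ⌊log₂(s*)⌋ and q ∈ [1,2]. The function w(b) := b^{1/q}·√((1/n)·log(2p/b)) satisfies Assumption 1: (i) w is increasing on the real interval [1, s*]; (ii) Σ_{k=1}^m w(2^k) ≤ C'·w(2^m) for all m ∈ {1,…,M}, with the constant C' = 1/(1−2^{−1/q}) + 4√(log 2)/(1−2^{−1/(2q)}); (iii) w(2b) ≤ 2^{1/q}·w(b) for all integers b ∈ {1,…,s*}. -/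
noncomputable section

/-- The weight function `w(b) = b^{1/q}·√((1/n)·log(2p/b))`. -/
def wEst (n p : ℕ) (q b : ℝ) : ℝ := b ^ (1 / q) * Real.sqrt ((1 / n) * Real.log (2 * p / b))

lemma geomBound {r : ℝ} (h0 : 0 ≤ r) (h1 : r < 1) (m : ℕ) :
    ∑ i ∈ Finset.range m, r ^ i ≤ 1 / (1 - r) := by
  rw [geom_sum_eq h1.ne m]
  have hr : 0 < 1 - r := by linarith
  rw [show (r ^ m - 1) / (r - 1) = (1 - r ^ m) / (1 - r) by
    rw [div_eq_div_iff (by linarith) hr.ne']; ring]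
  rw [div_le_div_iff₀ hr hr]
  nlinarith [pow_nonneg h0 m]

lemma sqrtAdd {a b : ℝ} (ha : 0 ≤ a) (hb : 0 ≤ b) :
    Real.sqrt (a + b) ≤ Real.sqrt a + Real.sqrt b := by
  have h := Real.sqrt_le_sqrt (show a + b ≤ (Real.sqrt a + Real.sqrt b) ^ 2 by
    have := Real.sq_sqrt ha
    have := Real.sq_sqrt hb
    nlinarith [Real.sqrt_nonneg a, Real.sqrt_nonneg b, mul_nonneg (Real.sqrt_nonneg a) (Real.sqrt_nonneg b)])
  rwa [Real.sqrt_sq (by positivity)] at h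

lemma sqrtNat {q : ℝ} (hq1 : 1 ≤ q) (hq2 : q ≤ 2) (j : ℕ) :
    Real.sqrt j ≤ 4 * (2:ℝ) ^ ((j:ℝ) / (2*q)) := by
  have hq0 : 0 < q := lt_of_lt_of_le one_pos hq1
  have hlog2 : (1:ℝ)/2 ≤ Real.log 2 := by
    have := Real.log_two_gt_d9; linarith
  -- j ≤ 16 * 2^(j/q)
  have key : (j:ℝ) ≤ 16 * (2:ℝ) ^ ((j:ℝ) / q) := by
    have h1 : (2:ℝ) ^ ((j:ℝ)/q) = Real.exp ((j:ℝ)/q * Real.log 2) := by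
      rw [Real.rpow_def_of_pos (by norm_num : (0:ℝ) < 2), mul_comm]
    have h2 : (j:ℝ)/q * Real.log 2 + 1 ≤ Real.exp ((j:ℝ)/q * Real.log 2) :=
      Real.add_one_le_exp _
    have h3 : (j:ℝ)/2 ≤ (j:ℝ)/q := by
      apply div_le_div_of_nonneg_left (Nat.cast_nonneg j) hq0 hq2
    have hj : (0:ℝ) ≤ j := Nat.cast_nonneg j
    rw [h1]
    nlinarith [mul_le_mul_of_nonneg_left hlog2 (div_nonneg hj hq0.le),
      mul_le_mul_of_nonneg_right h3 (le_trans (by norm_num) hlog2)]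
  have h4 : Real.sqrt (j:ℝ) ≤ Real.sqrt (16 * (2:ℝ) ^ ((j:ℝ)/q)) := Real.sqrt_le_sqrt key
  rw [Real.sqrt_mul (by norm_num : (0:ℝ) ≤ 16),
    show Real.sqrt 16 = 4 by rw [show (16:ℝ) = 4^2 by norm_num, Real.sqrt_sq (by norm_num)],
    show Real.sqrt ((2:ℝ)^((j:ℝ)/q)) = (2:ℝ)^((j:ℝ)/(2*q)) by
      rw [Real.sqrt_eq_rpow, ← Real.rpow_mul (by norm_num : (0:ℝ) ≤ 2)]
      congr 1
      ring] at h4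
  exact h4

lemma logkey {p sstar : ℕ} (hp : 1 ≤ p) (hsp : (sstar : ℝ) * Real.exp 1 ≤ p)
    (hsstar : 2 ≤ sstar) {b : ℝ} (hb1 : 1 ≤ b) (hbs : b ≤ sstar) :
    1 + Real.log 2 ≤ Real.log (2 * p / b) := by
  have hb0 : (0:ℝ) < b := lt_of_lt_of_le one_pos hb1
  have hs0 : (0:ℝ) < sstar := by positivity
  have he : (0:ℝ) < Real.exp 1 := Real.exp_pos 1
  have h1 : Real.exp 1 * 2 ≤ 2 * p / b := by
    rw [le_div_iff₀ hb0]
    have : (sstar:ℝ) * Real.exp 1 * 2 ≤ 2 * (p:ℝ) := by linarith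
    nlinarith [mul_le_mul_of_nonneg_left hbs (by positivity : (0:ℝ) ≤ Real.exp 1 * 2)]
  calc 1 + Real.log 2 = Real.log (Real.exp 1 * 2) := by
        rw [Real.log_mul (Real.exp_ne_zero 1) two_ne_zero, Real.log_exp]
    _ ≤ Real.log (2 * p / b) := Real.log_le_log (by positivity) h1

lemma monoPart (n p sstar : ℕ) (q : ℝ) (hn : 1 ≤ n) (hp : 1 ≤ p) (hsstar : 2 ≤ sstar)
    (hsp : (sstar : ℝ) * Real.exp 1 ≤ p) (hq1 : 1 ≤ q) (hq2 : q ≤ 2) :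
    MonotoneOn (wEst n p q) (Set.Icc (1 : ℝ) (sstar : ℝ)) := by
  intro a ha b hb hab
  obtain ⟨ha1, has⟩ := ha
  obtain ⟨hb1, hbs⟩ := hb
  have ha0 : (0:ℝ) < a := lt_of_lt_of_le one_pos ha1
  have hb0 : (0:ℝ) < b := lt_of_lt_of_le one_pos hb1
  have hq0 : (0:ℝ) < q := lt_of_lt_of_le one_pos hq1
  have hn0 : (0:ℝ) < n := by exact_mod_cast hn
  have hp0 : (0:ℝ) < p := by exact_mod_cast hp
  set La := Real.log (2 * p / a) with hLadef
  set Lb := Real.log (2 * p / b) with hLbdef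
  have hLb1 : 1 ≤ Lb :=
    le_trans (by linarith [Real.log_nonneg (by norm_num : (1:ℝ) ≤ 2)])
      (logkey hp hsp hsstar hb1 hbs)
  have hLa : La ≤ (b / a) * Lb := by
    have hlog : La - Lb = Real.log (b / a) := by
      rw [hLadef, hLbdef, Real.log_div (by positivity) ha0.ne',
        Real.log_div (by positivity) hb0.ne', Real.log_div hb0.ne' ha0.ne']
      ring
    have h2 : Real.log (b / a) ≤ b / a - 1 := Real.log_le_sub_one_of_pos (by positivity)
    have h3 : 1 ≤ b / a := (one_le_div ha0).2 hab
    nlinarith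
  have he : 0 ≤ 2 / q - 1 := by
    rw [sub_nonneg, le_div_iff₀ hq0]; linarith
  have e1 : a ^ ((2:ℝ) / q) * La ≤ b ^ ((2:ℝ) / q) * Lb := by
    have s1 : a ^ ((2:ℝ)/q) * La ≤ a ^ ((2:ℝ)/q) * ((b/a) * Lb) :=
      mul_le_mul_of_nonneg_left hLa (Real.rpow_nonneg ha0.le _)
    have s2 : a ^ ((2:ℝ)/q) * ((b/a) * Lb) = (a ^ ((2:ℝ)/q - 1) * b) * Lb := by
      rw [Real.rpow_sub ha0, Real.rpow_one]
      field_simp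
    have s3 : a ^ ((2:ℝ)/q - 1) ≤ b ^ ((2:ℝ)/q - 1) := Real.rpow_le_rpow ha0.le hab he
    have s4 : (a ^ ((2:ℝ)/q - 1) * b) * Lb ≤ (b ^ ((2:ℝ)/q - 1) * b) * Lb :=
      mul_le_mul_of_nonneg_right (mul_le_mul_of_nonneg_right s3 hb0.le) (by linarith)
    have s5 : b ^ ((2:ℝ)/q - 1) * b = b ^ ((2:ℝ)/q) := by
      rw [Real.rpow_sub hb0, Real.rpow_one]
      field_simp
    have s5' : b ^ ((2:ℝ)/q - 1) * b * Lb = b ^ ((2:ℝ)/q) * Lb := by rw [s5]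
    linarith [s1, s2, s4]
  have hsq : a ^ ((2:ℝ)/q) * ((1/(n:ℝ)) * La) ≤ b ^ ((2:ℝ)/q) * ((1/(n:ℝ)) * Lb) := by
    have := mul_le_mul_of_nonneg_left e1 (by positivity : (0:ℝ) ≤ 1/(n:ℝ))
    nlinarith [this]
  have key : ∀ x : ℝ, 0 < x →
      wEst n p q x = Real.sqrt (x ^ ((2:ℝ)/q) * ((1/(n:ℝ)) * Real.log (2 * p / x))) := by
    intro x hx
    unfold wEst
    rw [Real.sqrt_mul (by positivity : (0:ℝ) ≤ x ^ ((2:ℝ)/q))]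
    congr 1
    rw [show (2:ℝ)/q = (1/q) * 2 by ring, Real.rpow_mul hx.le, Real.rpow_two,
      Real.sqrt_sq (Real.rpow_nonneg hx.le _)]
  rw [key a ha0, key b hb0]
  exact Real.sqrt_le_sqrt hsq

lemma two_pow_rpow (k : ℕ) (y : ℝ) : ((2:ℝ)^k) ^ y = (2:ℝ) ^ ((k:ℝ) * y) := by
  rw [← Real.rpow_natCast 2 k, ← Real.rpow_mul (by norm_num)]

lemma part2 (n p sstar m : ℕ) (q : ℝ)
    (hn : 1 ≤ n) (hp : 1 ≤ p) (hsstar : 2 ≤ sstar) (hsp : (sstar : ℝ) * Real.exp 1 ≤ p)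
    (hq1 : 1 ≤ q) (hq2 : q ≤ 2) (hm1 : 1 ≤ m) (hm2 : m ≤ Nat.log 2 sstar) :
    ∑ k ∈ Finset.Icc 1 m, wEst n p q ((2 : ℝ) ^ k) ≤
      (1 / (1 - (2 : ℝ) ^ (-(1 / q))) +
        4 * Real.sqrt (Real.log 2) / (1 - (2 : ℝ) ^ (-(1 / (2 * q))))) *
        wEst n p q ((2 : ℝ) ^ m) := by
  have hq0 : (0:ℝ) < q := lt_of_lt_of_le one_pos hq1
  have hn0 : (0:ℝ) < n := by exact_mod_cast hn
  have hp0 : (0:ℝ) < p := by exact_mod_cast hp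
  have hpos : (0:ℝ) < 2 := two_pos
  set c1 := (2:ℝ) ^ (-(1/q)) with hc1def
  set c2 := (2:ℝ) ^ (-(1/(2*q))) with hc2def
  have hc1 : 0 ≤ c1 := (Real.rpow_pos_of_pos hpos _).le
  have hc2 : 0 ≤ c2 := (Real.rpow_pos_of_pos hpos _).le
  have hc1' : c1 < 1 := Real.rpow_lt_one_of_one_lt_of_neg one_lt_two (by
    rw [neg_lt, neg_zero]; positivity)
  have hc2' : c2 < 1 := Real.rpow_lt_one_of_one_lt_of_neg one_lt_two (by
    rw [neg_lt, neg_zero]; positivity)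
  -- 2^m ≤ sstar
  have hpowN : 2 ^ m ≤ sstar := (Nat.le_log_iff_pow_le one_lt_two (by omega)).1 hm2
  have hpow : (2:ℝ) ^ m ≤ (sstar:ℝ) := by exact_mod_cast hpowN
  have h2m1 : (1:ℝ) ≤ (2:ℝ) ^ m := one_le_pow₀ one_le_two
  set A := Real.log (2 * (p:ℝ) / (2:ℝ) ^ m) with hAdef
  have hA : 1 ≤ A :=
    le_trans (by linarith [Real.log_nonneg (by norm_num : (1:ℝ) ≤ 2)])
      (logkey hp hsp hsstar h2m1 hpow)
  set W := wEst n p q ((2:ℝ) ^ m) with hWdef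
  set S := Real.sqrt ((1/(n:ℝ)) * A) with hSdef
  have hWeq : W = (2:ℝ) ^ ((m:ℝ) * (1/q)) * S := by
    rw [hWdef]; unfold wEst; rw [two_pow_rpow]
  have hS0 : 0 ≤ S := Real.sqrt_nonneg _
  have hW0 : 0 ≤ W := by
    rw [hWeq]; positivity
  set s2l := Real.sqrt (Real.log 2) with hs2ldef
  have hs2l0 : 0 ≤ s2l := Real.sqrt_nonneg _
  have hlog2 : 0 ≤ Real.log 2 := Real.log_nonneg one_le_two
  -- per-term bound
  have hterm : ∀ k ∈ Finset.Icc 1 m,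
      wEst n p q ((2:ℝ)^k) ≤ (c1 ^ (m-k) + 4 * s2l * c2 ^ (m-k)) * W := by
    intro k hk
    rw [Finset.mem_Icc] at hk
    obtain ⟨hk1, hkm⟩ := hk
    set j := m - k with hj
    have hjc : (j:ℝ) = (m:ℝ) - (k:ℝ) := by
      rw [hj]; push_cast [Nat.cast_sub hkm]; ring
    have hlogk : Real.log (2 * (p:ℝ) / (2:ℝ)^k) = A + (j:ℝ) * Real.log 2 := by
      rw [hAdef, Real.log_div (by positivity) (by positivity),
        Real.log_div (by positivity) (by positivity), Real.log_pow, Real.log_pow, hjc]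
      ring
    have hS0' : 0 ≤ (1/(n:ℝ)) * A := by
      apply mul_nonneg (by positivity); linarith
    have expand : wEst n p q ((2:ℝ)^k) =
        (2:ℝ) ^ ((k:ℝ) * (1/q)) *
          Real.sqrt ((1/(n:ℝ)) * A + (1/(n:ℝ)) * ((j:ℝ) * Real.log 2)) := by
      unfold wEst
      rw [hlogk, two_pow_rpow, mul_add]
    rw [expand]
    have step1 := sqrtAdd hS0' (show (0:ℝ) ≤ (1/(n:ℝ)) * ((j:ℝ) * Real.log 2) by positivity)
    have hc1j : c1 ^ j * (2:ℝ) ^ ((m:ℝ) * (1/q)) = (2:ℝ) ^ ((k:ℝ) * (1/q)) := by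
      rw [hc1def, ← Real.rpow_natCast ((2:ℝ) ^ (-(1/q))) j, ← Real.rpow_mul hpos.le,
        ← Real.rpow_add hpos]
      congr 1
      rw [hjc]; ring
    have hc2j : (2:ℝ) ^ ((k:ℝ) * (1/q)) * (2:ℝ) ^ ((j:ℝ) / (2*q)) =
        c2 ^ j * (2:ℝ) ^ ((m:ℝ) * (1/q)) := by
      rw [hc2def, ← Real.rpow_natCast ((2:ℝ) ^ (-(1/(2*q)))) j, ← Real.rpow_mul hpos.le,
        ← Real.rpow_add hpos, ← Real.rpow_add hpos]
      congr 1
      rw [hjc]; field_simp; ring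
    have hsq2 : Real.sqrt ((1/(n:ℝ)) * ((j:ℝ) * Real.log 2)) =
        Real.sqrt (j:ℝ) * (Real.sqrt (Real.log 2) * Real.sqrt (1/(n:ℝ))) := by
      rw [show (1/(n:ℝ)) * ((j:ℝ) * Real.log 2) = (j:ℝ) * (Real.log 2 * (1/(n:ℝ))) by ring,
        Real.sqrt_mul (Nat.cast_nonneg j), Real.sqrt_mul hlog2]
    have hsn : Real.sqrt (1/(n:ℝ)) ≤ S := by
      rw [hSdef]
      apply Real.sqrt_le_sqrt
      nlinarith [one_div_pos.2 hn0]
    have hrk : (0:ℝ) ≤ (2:ℝ) ^ ((k:ℝ) * (1/q)) := (Real.rpow_pos_of_pos hpos _).le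
    calc (2:ℝ) ^ ((k:ℝ) * (1/q)) *
          Real.sqrt ((1/(n:ℝ)) * A + (1/(n:ℝ)) * ((j:ℝ) * Real.log 2))
        ≤ (2:ℝ) ^ ((k:ℝ) * (1/q)) * (S + Real.sqrt ((1/(n:ℝ)) * ((j:ℝ) * Real.log 2))) :=
          mul_le_mul_of_nonneg_left step1 hrk
      _ = (2:ℝ) ^ ((k:ℝ) * (1/q)) * S +
          (2:ℝ) ^ ((k:ℝ) * (1/q)) * (Real.sqrt (j:ℝ) * (s2l * Real.sqrt (1/(n:ℝ)))) := by
          rw [hsq2]; ring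
      _ ≤ (2:ℝ) ^ ((k:ℝ) * (1/q)) * S +
          (2:ℝ) ^ ((k:ℝ) * (1/q)) * ((4 * (2:ℝ) ^ ((j:ℝ)/(2*q))) * (s2l * S)) := by
          gcongr
          · exact sqrtNat hq1 hq2 j
      _ = c1 ^ j * W + 4 * s2l * (c2 ^ j * W) := by
          rw [hWeq]
          linear_combination (-S) * hc1j + 4 * s2l * S * hc2j
      _ = (c1 ^ j + 4 * s2l * c2 ^ j) * W := by ring
  -- sum the per-term bounds
  have hre : ∀ c : ℝ, 0 ≤ c → c < 1 → ∑ k ∈ Finset.Icc 1 m, c ^ (m - k) ≤ 1/(1-c) := by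
    intro c h0 h1
    have heq : ∑ k ∈ Finset.Icc 1 m, c ^ (m - k) = ∑ i ∈ Finset.range m, c ^ i := by
      rw [← Finset.Ico_add_one_right_eq_Icc, Finset.sum_Ico_eq_sum_range]
      rw [Finset.sum_congr rfl (fun i _ => by rw [show m - (1 + i) = m - 1 - i by omega])]
      exact Finset.sum_range_reflect (fun i => c ^ i) m
    rw [heq]; exact geomBound h0 h1 m
  calc ∑ k ∈ Finset.Icc 1 m, wEst n p q ((2:ℝ)^k)
      ≤ ∑ k ∈ Finset.Icc 1 m, (c1 ^ (m-k) + 4 * s2l * c2 ^ (m-k)) * W :=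
        Finset.sum_le_sum hterm
    _ = ((∑ k ∈ Finset.Icc 1 m, c1 ^ (m-k)) + 4 * s2l * (∑ k ∈ Finset.Icc 1 m, c2 ^ (m-k))) * W := by
        rw [← Finset.sum_mul, Finset.sum_add_distrib, ← Finset.mul_sum]
    _ ≤ (1/(1-c1) + 4 * s2l / (1-c2)) * W := by
        apply mul_le_mul_of_nonneg_right ?_ hW0
        have g1 := hre c1 hc1 hc1'
        have g2 := hre c2 hc2 hc2'
        have h4 : 4 * s2l * (∑ k ∈ Finset.Icc 1 m, c2 ^ (m-k)) ≤ 4 * s2l * (1/(1-c2)) :=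
          mul_le_mul_of_nonneg_left g2 (by positivity)
        have he : 4 * s2l * (1/(1-c2)) = 4 * s2l / (1-c2) := by ring
        linarith

lemma part3 (n p : ℕ) (q : ℝ) (hp : 1 ≤ p) (hq1 : 1 ≤ q) (b : ℕ) (hb1 : 1 ≤ b) :
    wEst n p q (2 * (b : ℝ)) ≤ (2 : ℝ) ^ (1 / q) * wEst n p q (b : ℝ) := by
  have hb0 : (0:ℝ) < b := by exact_mod_cast hb1
  have hp0 : (0:ℝ) < p := by exact_mod_cast hp
  unfold wEst
  rw [Real.mul_rpow (by norm_num : (0:ℝ) ≤ 2) hb0.le, mul_assoc]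
  apply mul_le_mul_of_nonneg_left ?_ (Real.rpow_nonneg (by norm_num) _)
  apply mul_le_mul_of_nonneg_left ?_ (Real.rpow_nonneg hb0.le _)
  apply Real.sqrt_le_sqrt
  apply mul_le_mul_of_nonneg_left ?_ (by positivity)
  apply Real.log_le_log (by positivity)
  apply div_le_div_of_nonneg_left (by positivity) hb0
  linarith

/-- Lemma 1 for `w(b) = b^{1/q}·√((1/n)·log(2p/b))`, `q ∈ [1,2]`:
it satisfies Assumption 1, with the explicit constant
`C' = 1/(1−2^{−1/q}) + 4√(log 2)/(1−2^{−1/(2q)})` in part (ii). -/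
theorem assumption_w_estimation_weight (n p sstar : ℕ) (q : ℝ)
    (hn : 1 ≤ n) (hp : 1 ≤ p) (hsstar : 2 ≤ sstar) (hsp : (sstar : ℝ) * Real.exp 1 ≤ p)
    (hq1 : 1 ≤ q) (hq2 : q ≤ 2) :
    MonotoneOn (wEst n p q) (Set.Icc (1 : ℝ) (sstar : ℝ)) ∧
    (∀ m : ℕ, 1 ≤ m → m ≤ Nat.log 2 sstar →
      ∑ k ∈ Finset.Icc 1 m, wEst n p q ((2 : ℝ) ^ k) ≤
        (1 / (1 - (2 : ℝ) ^ (-(1 / q))) +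
          4 * Real.sqrt (Real.log 2) / (1 - (2 : ℝ) ^ (-(1 / (2 * q))))) *
          wEst n p q ((2 : ℝ) ^ m)) ∧
    (∀ b : ℕ, 1 ≤ b → b ≤ sstar →
      wEst n p q (2 * (b : ℝ)) ≤ (2 : ℝ) ^ (1 / q) * wEst n p q (b : ℝ)) := by
  exact ⟨monoPart n p sstar q hn hp hsstar hsp hq1 hq2,
    fun m hm1 hm2 => part2 n p sstar m q hn hp hsstar hsp hq1 hq2 hm1 hm2,
    fun b hb1 _ => part3 n p q hp hq1 b hb1⟩

end
end

section
/- Let X ∈ ℝ^{n×p}, Y ∈ ℝ^n, λ > 0, and let β̂^{SQL} be any minimizer over β ∈ ℝ^p of (1/√n)|Y − Xβ|₂ + λ|β|₁. Let β* ∈ ℝ^p and S ⊆ {1,…,p} be such that β*_i = 0 for all i ∉ S, and assume ε := Y − Xβ* ≠ 0. Then |(β̂^{SQL} − β*)_{S^C}|₁ ≤ |(β̂^{SQL} − β*)_S|₁ + (1/(λ·√n·|ε|₂))·⟨Xᵀε, β̂^{SQL} − β*⟩. -/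
/-!
Write `ε = Y - X βs` and `h = βh - βs`. Comparing the objective at `βh` with its value at `βs`
bounds `λ (|βh|₁ - |βs|₁)` by `(|ε|₂ - |ε - X h|₂) / √n`. Since `ε ≠ 0`, the vector `ε / |ε|₂`
is a subgradient of `|·|₂` at `ε`, so this is at most `⟨ε, X h⟩ / (√n |ε|₂) = ⟨Xᵀ ε, h⟩ / (√n |ε|₂)`.
Finally, as `βs` vanishes off `S`, the triangle inequality coordinatewise gives
`|h_{Sᶜ}|₁ - |h_S|₁ ≤ |βh|₁ - |βs|₁`.
-/

noncomputable section

/-- The `l2` (Euclidean) norm of a vector. -/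
def l2norm {m : ℕ} (u : Fin m → ℝ) : ℝ := Real.sqrt (∑ i, (u i) ^ 2)

/-- The `l1` norm of a vector. -/
def l1norm {m : ℕ} (u : Fin m → ℝ) : ℝ := ∑ i, |u i|

open Matrix

section Norms

variable {m : ℕ}

lemma l2norm_pos {u : Fin m → ℝ} (hu : u ≠ 0) : 0 < l2norm u := by
  obtain ⟨i, hi⟩ := Function.ne_iff.mp hu
  exact Real.sqrt_pos.2 <|
    Finset.sum_pos' (fun j _ => sq_nonneg (u j)) ⟨i, Finset.mem_univ i, sq_pos_of_ne_zero hi⟩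

lemma l2norm_sq (u : Fin m → ℝ) : l2norm u ^ 2 = u ⬝ᵥ u := by
  rw [l2norm, Real.sq_sqrt (Finset.sum_nonneg fun i _ => sq_nonneg (u i))]
  exact Finset.sum_congr rfl fun i _ => sq (u i)

lemma dotProduct_le_l2norm_mul_l2norm (u v : Fin m → ℝ) : u ⬝ᵥ v ≤ l2norm u * l2norm v :=
  Real.sum_mul_le_sqrt_mul_sqrt _ u v

lemma l2norm_sub_l2norm_sub_le {u : Fin m → ℝ} (hu : u ≠ 0) (v : Fin m → ℝ) :
    l2norm u - l2norm (u - v) ≤ u ⬝ᵥ v / l2norm u := by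
  have hpos := l2norm_pos hu
  have hcs := dotProduct_le_l2norm_mul_l2norm u (u - v)
  rw [dotProduct_sub, ← l2norm_sq] at hcs
  rw [le_div_iff₀ hpos]
  nlinarith

lemma l1norm_add_l1norm_compl_le {βh βs : Fin m → ℝ} {S : Finset (Fin m)}
    (hS : ∀ i ∉ S, βs i = 0) :
    l1norm βs + l1norm (fun i => if i ∈ S then 0 else βh i - βs i) ≤
      l1norm βh + l1norm (fun i => if i ∈ S then βh i - βs i else 0) := by
  simp only [l1norm, ← Finset.sum_add_distrib]
  refine Finset.sum_le_sum fun i _ => ?_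
  by_cases hi : i ∈ S
  · simp only [hi, if_true, abs_zero, add_zero]
    linarith [abs_sub_abs_le_abs_sub (βs i) (βh i), abs_sub_comm (βs i) (βh i)]
  · simp [hi, hS i hi]

end Norms

/-- Lemma 4 (cone-type inequality for the Square-Root Lasso, deterministic). -/
theorem sqrt_lasso_cone_inequality (n p : ℕ)
    (X : Matrix (Fin n) (Fin p) ℝ) (Y : Fin n → ℝ) (lam : ℝ) (hlam : 0 < lam)
    (βh : Fin p → ℝ)
    (hmin : ∀ β : Fin p → ℝ,
      (1 / Real.sqrt n) * l2norm (Y - X.mulVec βh) + lam * l1norm βh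
      ≤ (1 / Real.sqrt n) * l2norm (Y - X.mulVec β) + lam * l1norm β)
    (βs : Fin p → ℝ) (S : Finset (Fin p)) (hS : ∀ i ∉ S, βs i = 0)
    (hne : Y - X.mulVec βs ≠ 0) :
    l1norm (fun i => if i ∈ S then 0 else βh i - βs i) ≤
      l1norm (fun i => if i ∈ S then βh i - βs i else 0)
      + (1 / (lam * Real.sqrt n * l2norm (Y - X.mulVec βs))) *
          ∑ j, X.transpose.mulVec (Y - X.mulVec βs) j * (βh j - βs j) := by
  set ε := Y - X *ᵥ βs
  set h := βh - βs
  have hn : 0 < n := Nat.pos_of_ne_zero <| by rintro rfl; exact hne (Subsingleton.elim _ _)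
  have hsqrt : 0 < Real.sqrt n := Real.sqrt_pos.2 (by exact_mod_cast hn)
  have hresid : Y - X *ᵥ βh = ε - X *ᵥ h := by
    simp only [ε, h, mulVec_sub]; abel
  have hinner : ∑ j, (Xᵀ *ᵥ ε) j * (βh j - βs j) = ε ⬝ᵥ X *ᵥ h := by
    change Xᵀ *ᵥ ε ⬝ᵥ h = _
    rw [mulVec_transpose, dotProduct_mulVec]
  have hopt : 1 / Real.sqrt n * l2norm (ε - X *ᵥ h) + lam * l1norm βh
      ≤ 1 / Real.sqrt n * l2norm ε + lam * l1norm βs := hresid ▸ hmin βs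
  have hl1 := l1norm_add_l1norm_compl_le (βh := βh) hS
  have hscaled : lam * (l1norm (fun i => if i ∈ S then 0 else βh i - βs i)
      - l1norm (fun i => if i ∈ S then βh i - βs i else 0))
      ≤ ε ⬝ᵥ X *ᵥ h / l2norm ε / Real.sqrt n :=
    calc _ ≤ lam * (l1norm βh - l1norm βs) := mul_le_mul_of_nonneg_left (by linarith) hlam.le
      _ ≤ (l2norm ε - l2norm (ε - X *ᵥ h)) / Real.sqrt n := by
        rw [div_eq_inv_mul, ← one_div]; linarith
      _ ≤ ε ⬝ᵥ X *ᵥ h / l2norm ε / Real.sqrt n := by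
        gcongr; exact l2norm_sub_l2norm_sub_le hne _
  rw [hinner, ← sub_le_iff_le_add']
  exact ((le_div_iff₀' hlam).2 hscaled).trans_eq (by ring)

end
end

section
/- Let X ∈ ℝ^{n×p}, Y ∈ ℝ^n, let λ₁ ≥ … ≥ λ_p > 0 be weights, and let β̂^{SQS} be any minimizer over β ∈ ℝ^p of (1/√n)|Y − Xβ|₂ + |β|_*. Let s ∈ {1,…,p} and β* ∈ ℝ^p have at most s nonzero coordinates, assume ε := Y − Xβ* ≠ 0, and set u := β̂^{SQS} − β*. Then Σ_{j=s+1}^p λ_j·|u|_{(j)} ≤ Σ_{j=1}^s λ_j·|u|_{(j)} + (1/(√n·|ε|₂))·⟨Xᵀε, u⟩. -/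
noncomputable section

/-- `ordDesc u j` is the `(j+1)`-th largest value among `|u i|`, i.e. `|u|_{(j+1)}`. -/
def ordDesc {p : ℕ} (u : Fin p → ℝ) : Fin p → ℝ :=
  fun j => |u (Tuple.sort (fun i => |u i|) j.rev)|

/-- The sorted `l1` norm `|u|_* = ∑_j λ_j |u|_{(j)}` with weights `lam`. -/
def sortedL1 {p : ℕ} (lam : Fin p → ℝ) (u : Fin p → ℝ) : ℝ :=
  ∑ j, lam j * ordDesc u j

/-- The number of nonzero coordinates. -/
def l0norm {m : ℕ} (u : Fin m → ℝ) : ℕ := (Finset.univ.filter fun i => u i ≠ 0).card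

def sortPerm {p : ℕ} (u : Fin p → ℝ) : Equiv.Perm (Fin p) :=
  Fin.revPerm.trans (Tuple.sort fun i => |u i|)

lemma ordDesc_apply {p : ℕ} (u : Fin p → ℝ) (j : Fin p) :
    ordDesc u j = |u (sortPerm u j)| := by
  simp [ordDesc, sortPerm]

lemma ordDesc_nonneg {p : ℕ} (u : Fin p → ℝ) (j : Fin p) : 0 ≤ ordDesc u j :=
  abs_nonneg _

lemma ordDesc_antitone {p : ℕ} (u : Fin p → ℝ) : Antitone (ordDesc u) := by
  intro j k h
  have := Tuple.monotone_sort (fun i => |u i|) (Fin.rev_le_rev.mpr h)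
  simpa [ordDesc, Function.comp] using this

lemma card_ordDesc_eq {p : ℕ} (u : Fin p → ℝ) (c : ℝ) :
    (Finset.univ.filter fun j : Fin p => c ≤ ordDesc u j).card
      = (Finset.univ.filter fun i : Fin p => c ≤ |u i|).card := by
  apply Finset.card_nbij (fun j => sortPerm u j)
  · intro a ha
    simp only [Finset.coe_filter, Set.mem_setOf_eq, Finset.mem_filter, Finset.mem_univ, true_and] at ha ⊢
    rwa [ordDesc_apply] at ha
  · intro a _ b _ hab
    exact (sortPerm u).injective hab
  · intro i hi
    simp only [Finset.coe_filter, Finset.mem_univ, true_and, Set.mem_setOf_eq,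
      Set.mem_image] at hi ⊢
    exact ⟨(sortPerm u).symm i, by rwa [ordDesc_apply, Equiv.apply_symm_apply], by simp⟩


lemma card_le_of_ordDesc {p : ℕ} (u : Fin p → ℝ) (c : ℝ) (k : Fin p)
    (hc : c ≤ ordDesc u k) :
    (k : ℕ) + 1 ≤ (Finset.univ.filter fun i : Fin p => c ≤ |u i|).card := by
  rw [← card_ordDesc_eq]
  calc (k : ℕ) + 1 = (Finset.Iic k).card := (Fin.card_Iic k).symm
    _ ≤ _ := by
        apply Finset.card_le_card
        intro j hj
        simp only [Finset.mem_Iic] at hj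
        simp only [Finset.mem_filter, Finset.mem_univ, true_and]
        exact le_trans hc (ordDesc_antitone u hj)

lemma ordDesc_le_of_card {p : ℕ} (u : Fin p → ℝ) (c : ℝ) (k : Fin p)
    (h : (k : ℕ) + 1 ≤ (Finset.univ.filter fun i : Fin p => c ≤ |u i|).card) :
    c ≤ ordDesc u k := by
  by_contra hlt
  push_neg at hlt
  rw [← card_ordDesc_eq] at h
  have hsub : (Finset.univ.filter fun j : Fin p => c ≤ ordDesc u j) ⊆ Finset.Iio k := by
    intro j hj
    simp only [Finset.mem_filter, Finset.mem_univ, true_and] at hj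
    simp only [Finset.mem_Iio]
    by_contra hk
    push_neg at hk
    exact absurd (le_trans hj (ordDesc_antitone u hk)) (not_le.mpr hlt)
  have := Finset.card_le_card hsub
  rw [Fin.card_Iio] at this
  omega

lemma ordDesc_mono_dom {p : ℕ} (u v : Fin p → ℝ) (h : ∀ i, |u i| ≤ |v i|) (k : Fin p) :
    ordDesc u k ≤ ordDesc v k := by
  apply ordDesc_le_of_card
  calc (k:ℕ) + 1 ≤ (Finset.univ.filter fun i : Fin p => ordDesc u k ≤ |u i|).card :=
        card_le_of_ordDesc u _ k le_rfl
    _ ≤ _ := by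
        apply Finset.card_le_card
        intro i hi
        simp only [Finset.mem_filter, Finset.mem_univ, true_and] at hi ⊢
        exact le_trans hi (h i)

lemma sum_perm_le_sortedL1 {p : ℕ} (lam u : Fin p → ℝ)
    (hmono : ∀ i j : Fin p, i ≤ j → lam j ≤ lam i) (e : Equiv.Perm (Fin p)) :
    ∑ j, lam j * |u (e j)| ≤ sortedL1 lam u := by
  have hmv : Monovary lam (ordDesc u) := by
    intro i j h
    rcases le_or_gt i j with hij | hij
    · exact absurd (ordDesc_antitone u hij) (not_le.mpr h)
    · exact hmono j i hij.le
  have hre := hmv.sum_smul_comp_perm_le_sum_smul (σ := e.trans (sortPerm u).symm)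
  have heq : ∀ j, |u (e j)| = ordDesc u ((e.trans (sortPerm u).symm) j) := by
    intro j
    rw [ordDesc_apply]
    simp
  calc ∑ j, lam j * |u (e j)| = ∑ j, lam j • ordDesc u ((e.trans (sortPerm u).symm) j) := by
        simp only [smul_eq_mul]; exact Finset.sum_congr rfl fun j _ => by rw [heq]
    _ ≤ ∑ j, lam j • ordDesc u j := hre
    _ = sortedL1 lam u := by simp [sortedL1, smul_eq_mul]

lemma ordDesc_eq_zero_of_sparse {p s : ℕ} (u : Fin p → ℝ) (hβ : l0norm u ≤ s)
    (k : Fin p) (hk : s ≤ (k : ℕ)) : ordDesc u k = 0 := by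
  by_contra h
  have hpos : 0 < ordDesc u k := lt_of_le_of_ne (abs_nonneg _) (Ne.symm h)
  have h1 := card_le_of_ordDesc u (ordDesc u k) k le_rfl
  have h2 : (Finset.univ.filter fun i : Fin p => ordDesc u k ≤ |u i|)
      ⊆ (Finset.univ.filter fun i : Fin p => u i ≠ 0) := by
    intro i hi
    simp only [Finset.mem_filter, Finset.mem_univ, true_and] at hi ⊢
    intro h0
    rw [h0] at hi
    simp at hi
    exact absurd hi (not_le.mpr hpos)
  have := Finset.card_le_card h2
  unfold l0norm at hβ
  omega

lemma cone_key {p s : ℕ} (lam βh βs : Fin p → ℝ)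
    (hlam_pos : ∀ j, 0 < lam j)
    (hlam_mono : ∀ i j : Fin p, i ≤ j → lam j ≤ lam i)
    (hβs : l0norm βs ≤ s) :
    sortedL1 lam βs
      + ∑ j ∈ Finset.univ.filter (fun j : Fin p => ¬ (j : ℕ) < s),
          lam j * ordDesc (βh - βs) j
    ≤ sortedL1 lam βh
      + ∑ j ∈ Finset.univ.filter (fun j : Fin p => (j : ℕ) < s),
          lam j * ordDesc (βh - βs) j := by
  classical
  set u : Fin p → ℝ := βh - βs with hu
  have hui : ∀ i, u i = βh i - βs i := fun i => rfl
  set D : Finset (Fin p) :=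
    (Finset.univ.filter fun j : Fin p => (j : ℕ) < s).image (sortPerm βs) with hD
  set M : ℝ := (∑ i, |u i|) + 1 with hMdef
  have hM : ∀ i, |u i| < M := by
    intro i
    have h1 : |u i| ≤ ∑ i, |u i| :=
      Finset.single_le_sum (fun i _ => abs_nonneg (u i)) (Finset.mem_univ i)
    linarith
  set v : Fin p → ℝ := fun i => if i ∈ D then M else |u i| with hv
  have hMpos : 0 < M := by
    have : 0 ≤ ∑ i, |u i| := Finset.sum_nonneg fun i _ => abs_nonneg _
    linarith
  have hvD : ∀ i ∈ D, v i = M := fun i hi => if_pos hi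
  have hvnD : ∀ i, i ∉ D → v i = |u i| := fun i hi => if_neg hi
  have hvabs : ∀ i, |v i| = v i := by
    intro i
    apply abs_of_nonneg
    by_cases hi : i ∈ D
    · rw [hvD i hi]; exact hMpos.le
    · rw [hvnD i hi]; exact abs_nonneg _
  have hHcard : (Finset.univ.filter fun j : Fin p => (j : ℕ) < s).card ≤ s := by
    have hmap : ∀ a ∈ (Finset.univ.filter fun j : Fin p => (j : ℕ) < s),
        (a : ℕ) ∈ Finset.range s := by
      intro a ha
      simp only [Finset.mem_filter, Finset.mem_univ, true_and] at ha
      simpa using ha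
    have := Finset.card_le_card_of_injOn Fin.val hmap
      (fun a _ b _ hab => Fin.val_injective hab)
    simpa using this
  have hDcard : D.card ≤ s := le_trans Finset.card_image_le hHcard
  have hdom : ∀ i, |u i| ≤ |v i| := by
    intro i
    rw [hvabs]
    by_cases hi : i ∈ D
    · rw [hvD i hi]; exact (hM i).le
    · rw [hvnD i hi]
  have htailv : ∀ j : Fin p, s ≤ (j : ℕ) → ordDesc v j < M := by
    intro j hj
    by_contra hc
    push_neg at hc
    have h1 := card_le_of_ordDesc v M j hc
    have h2 : (Finset.univ.filter fun i : Fin p => M ≤ |v i|) ⊆ D := by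
      intro i hi
      simp only [Finset.mem_filter, Finset.mem_univ, true_and] at hi
      by_contra hnd
      rw [hvabs, hvnD i hnd] at hi
      exact absurd hi (not_le.mpr (hM i))
    have := Finset.card_le_card h2
    omega
  have hev : ∀ j : Fin p, s ≤ (j : ℕ) →
      sortPerm v j ∉ D ∧ ordDesc v j = |u (sortPerm v j)| := by
    intro j hj
    have h1 : ordDesc v j = v (sortPerm v j) := by rw [ordDesc_apply, hvabs]
    have hnD : sortPerm v j ∉ D := by
      intro hD'
      have h2 := htailv j hj
      rw [h1, hvD _ hD'] at h2
      exact absurd h2 (lt_irrefl M)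
    exact ⟨hnD, by rw [h1, hvnD _ hnD]⟩
  have htail : ∀ j : Fin p, s ≤ (j : ℕ) → ordDesc u j ≤ |u (sortPerm v j)| := by
    intro j hj
    calc ordDesc u j ≤ ordDesc v j := ordDesc_mono_dom u v hdom j
      _ = |u (sortPerm v j)| := (hev j hj).2
  have hβs0 : ∀ i, i ∉ D → βs i = 0 := by
    intro i hi
    set j := (sortPerm βs).symm i with hj
    have hij : sortPerm βs j = i := Equiv.apply_symm_apply _ _
    have hjs : s ≤ (j : ℕ) := by
      by_contra hlt
      push_neg at hlt
      exact hi (Finset.mem_image.mpr ⟨j, by simpa using hlt, hij⟩)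
    have h0 := ordDesc_eq_zero_of_sparse βs hβs j hjs
    rw [ordDesc_apply, hij] at h0
    exact abs_eq_zero.mp h0
  set φ : Fin p → Fin p := fun j => if (j : ℕ) < s then sortPerm βs j else sortPerm v j
    with hφ
  have hφH : ∀ j : Fin p, (j : ℕ) < s → φ j = sortPerm βs j := fun j hj => if_pos hj
  have hφT : ∀ j : Fin p, ¬ (j : ℕ) < s → φ j = sortPerm v j := fun j hj => if_neg hj
  have hφTD : ∀ j : Fin p, ¬ (j : ℕ) < s → φ j ∉ D := by
    intro j hj
    rw [hφT j hj]
    exact (hev j (not_lt.mp hj)).1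
  have hinj : Function.Injective φ := by
    intro a b hab
    by_cases ha : (a : ℕ) < s <;> by_cases hb : (b : ℕ) < s
    · rw [hφH a ha, hφH b hb] at hab; exact (sortPerm βs).injective hab
    · exfalso
      apply hφTD b hb
      rw [← hab, hφH a ha]
      exact Finset.mem_image.mpr ⟨a, by simpa using ha, rfl⟩
    · exfalso
      apply hφTD a ha
      rw [hab, hφH b hb]
      exact Finset.mem_image.mpr ⟨b, by simpa using hb, rfl⟩
    · rw [hφT a ha, hφT b hb] at hab; exact (sortPerm v).injective hab
  set eφ : Equiv.Perm (Fin p) :=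
    Equiv.ofBijective φ (Finite.injective_iff_bijective.mp hinj) with heφdef
  have heφ : ∀ j, eφ j = φ j := fun _ => rfl
  set H := Finset.univ.filter fun j : Fin p => (j : ℕ) < s with hH
  set T := Finset.univ.filter fun j : Fin p => ¬ (j : ℕ) < s with hT
  have hsplit : ∀ f : Fin p → ℝ, ∑ j ∈ H, f j + ∑ j ∈ T, f j = ∑ j, f j := fun f =>
    Finset.sum_filter_add_sum_filter_not _ _ f
  -- (i)
  have hi1 : sortedL1 lam βs
      ≤ ∑ j ∈ H, lam j * |βh (φ j)| + ∑ j ∈ H, lam j * |u (φ j)| := by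
    have hz : ∑ j ∈ T, lam j * ordDesc βs j = 0 := by
      apply Finset.sum_eq_zero
      intro j hj
      simp only [hT, Finset.mem_filter, Finset.mem_univ, true_and, not_lt] at hj
      rw [ordDesc_eq_zero_of_sparse βs hβs j hj, mul_zero]
    have h1 : sortedL1 lam βs = ∑ j ∈ H, lam j * ordDesc βs j := by
      rw [sortedL1, ← hsplit (fun j => lam j * ordDesc βs j), hz, add_zero]
    rw [h1, ← Finset.sum_add_distrib]
    apply Finset.sum_le_sum
    intro j hj
    simp only [hH, Finset.mem_filter, Finset.mem_univ, true_and] at hj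
    rw [hφH j hj, ordDesc_apply, ← mul_add]
    apply mul_le_mul_of_nonneg_left _ (hlam_pos j).le
    have : βs (sortPerm βs j) = βh (sortPerm βs j) - u (sortPerm βs j) := by
      rw [hui]; ring
    rw [this]
    exact abs_sub _ _
  -- (ii)
  have hi2 : ∑ j ∈ T, lam j * ordDesc u j ≤ ∑ j ∈ T, lam j * |u (φ j)| := by
    apply Finset.sum_le_sum
    intro j hj
    simp only [hT, Finset.mem_filter, Finset.mem_univ, true_and, not_lt] at hj
    rw [hφT j (not_lt.mpr hj)]
    exact mul_le_mul_of_nonneg_left (htail j hj) (hlam_pos j).le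
  -- (iii)
  have hi3 : ∑ j ∈ T, lam j * |u (φ j)| = ∑ j ∈ T, lam j * |βh (φ j)| := by
    apply Finset.sum_congr rfl
    intro j hj
    simp only [hT, Finset.mem_filter, Finset.mem_univ, true_and] at hj
    have h0 := hβs0 (φ j) (hφTD j hj)
    rw [hui]
    simp only [Pi.sub_apply, h0, sub_zero]
  -- (iv)
  have hi4 : ∑ j ∈ H, lam j * |βh (φ j)| + ∑ j ∈ T, lam j * |βh (φ j)|
      ≤ sortedL1 lam βh := by
    rw [hsplit (fun j => lam j * |βh (φ j)|)]
    exact sum_perm_le_sortedL1 lam βh hlam_mono eφ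
  -- (v)
  have hi5 : ∑ j ∈ H, lam j * |u (φ j)| + ∑ j ∈ T, lam j * |u (φ j)|
      ≤ ∑ j ∈ H, lam j * ordDesc u j + ∑ j ∈ T, lam j * ordDesc u j := by
    rw [hsplit (fun j => lam j * |u (φ j)|), hsplit (fun j => lam j * ordDesc u j)]
    exact sum_perm_le_sortedL1 lam u hlam_mono eφ
  linarith

/-- Lemma 5 (cone-type inequality for the Square-Root Slope, deterministic). -/
theorem sqrt_slope_cone_inequality (n p : ℕ)
    (X : Matrix (Fin n) (Fin p) ℝ) (Y : Fin n → ℝ)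
    (lam : Fin p → ℝ) (hlam_pos : ∀ j, 0 < lam j)
    (hlam_mono : ∀ i j : Fin p, i ≤ j → lam j ≤ lam i)
    (βh : Fin p → ℝ)
    (hmin : ∀ β : Fin p → ℝ,
      (1 / Real.sqrt n) * l2norm (Y - X.mulVec βh) + sortedL1 lam βh
      ≤ (1 / Real.sqrt n) * l2norm (Y - X.mulVec β) + sortedL1 lam β)
    (s : ℕ) (hs : 1 ≤ s) (hsp : s ≤ p)
    (βs : Fin p → ℝ) (hβs : l0norm βs ≤ s)
    (hne : Y - X.mulVec βs ≠ 0) :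
    ∑ j ∈ Finset.univ.filter (fun j : Fin p => s ≤ (j : ℕ)),
        lam j * ordDesc (βh - βs) j ≤
      ∑ j ∈ Finset.univ.filter (fun j : Fin p => (j : ℕ) < s),
          lam j * ordDesc (βh - βs) j
      + (1 / (Real.sqrt n * l2norm (Y - X.mulVec βs))) *
          ∑ j, X.transpose.mulVec (Y - X.mulVec βs) j * (βh j - βs j) := by
  classical
  have hn : 0 < n := by
    rcases Nat.eq_zero_or_pos n with h0 | h0
    · exfalso
      apply hne
      funext i
      exact absurd i.2 (by omega)
    · exact h0
  set ε : Fin n → ℝ := Y - X.mulVec βs with hε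
  set w : Fin n → ℝ := X.mulVec (βh - βs) with hwdef
  have hw : Y - X.mulVec βh = ε - w := by
    rw [hwdef, Matrix.mulVec_sub, hε]
    abel
  have hA : 0 < l2norm ε := by
    rw [l2norm, Real.sqrt_pos]
    have hex : ∃ i, ε i ≠ 0 := by
      by_contra hc
      push_neg at hc
      exact hne (funext hc)
    obtain ⟨i, hi⟩ := hex
    calc (0:ℝ) < ε i ^ 2 := pow_two_pos_of_ne_zero hi
      _ ≤ ∑ i, ε i ^ 2 :=
        Finset.single_le_sum (fun i _ => sq_nonneg (ε i)) (Finset.mem_univ i)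
  have hN : 0 < Real.sqrt n := Real.sqrt_pos.mpr (by exact_mod_cast hn)
  -- Cauchy–Schwarz
  have hCS : ∑ i, ε i * (ε i - w i) ≤ l2norm ε * l2norm (ε - w) := by
    have h2 := Finset.sum_mul_sq_le_sq_mul_sq Finset.univ ε (fun i => ε i - w i)
    calc ∑ i, ε i * (ε i - w i) ≤ |∑ i, ε i * (ε i - w i)| := le_abs_self _
      _ = Real.sqrt ((∑ i, ε i * (ε i - w i)) ^ 2) := (Real.sqrt_sq_eq_abs _).symm
      _ ≤ Real.sqrt ((∑ i, ε i ^ 2) * ∑ i, (ε i - w i) ^ 2) := Real.sqrt_le_sqrt h2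
      _ = l2norm ε * l2norm (ε - w) := by
          rw [Real.sqrt_mul (Finset.sum_nonneg fun i _ => sq_nonneg (ε i))]
          simp [l2norm]
  have hsq : ∑ i, ε i ^ 2 = l2norm ε ^ 2 :=
    (Real.sq_sqrt (Finset.sum_nonneg fun i _ => sq_nonneg (ε i))).symm
  have hexp : ∑ i, ε i * (ε i - w i) = ∑ i, ε i ^ 2 - ∑ i, ε i * w i := by
    rw [← Finset.sum_sub_distrib]
    exact Finset.sum_congr rfl fun i _ => by ring
  set S : ℝ := ∑ i, ε i * w i with hSdef
  have hF1 : l2norm ε ^ 2 - S ≤ l2norm ε * l2norm (ε - w) := by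
    rw [← hsq]
    calc ∑ i, ε i ^ 2 - S = ∑ i, ε i * (ε i - w i) := by rw [hexp]
      _ ≤ _ := hCS
  have hS : ∑ j, X.transpose.mulVec ε j * (βh j - βs j) = S := by
    rw [hSdef, hwdef]
    simp only [Matrix.mulVec, dotProduct, Matrix.transpose_apply,
      Finset.sum_mul, Finset.mul_sum, Pi.sub_apply]
    rw [Finset.sum_comm]
    exact Finset.sum_congr rfl fun i _ => Finset.sum_congr rfl fun j _ => by ring
  have hopt := hmin βs
  rw [hw, ← hε] at hopt
  have hcone := cone_key (s := s) lam βh βs hlam_pos hlam_mono hβs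
  have hfilt : (Finset.univ.filter fun j : Fin p => s ≤ (j : ℕ))
      = Finset.univ.filter fun j : Fin p => ¬ (j : ℕ) < s := by
    apply Finset.filter_congr
    intro j _
    simp [not_lt]
  rw [hfilt, hS]
  have h1 : l2norm ε - l2norm (ε - w) ≤ S / l2norm ε := by
    have hm : (l2norm ε - l2norm (ε - w)) * l2norm ε ≤ S := by nlinarith [hF1]
    calc l2norm ε - l2norm (ε - w)
        = ((l2norm ε - l2norm (ε - w)) * l2norm ε) / l2norm ε := by field_simp
      _ ≤ S / l2norm ε := by gcongr
  have h3 : (1 / Real.sqrt n) * (l2norm ε - l2norm (ε - w))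
      ≤ (1 / Real.sqrt n) * (S / l2norm ε) :=
    mul_le_mul_of_nonneg_left h1 (by positivity)
  have h4 : (1 / Real.sqrt n) * (S / l2norm ε)
      = (1 / (Real.sqrt n * l2norm ε)) * S := by
    field_simp
  linarith [hcone, hopt, h3]

end
end

section
/- Let X ∈ ℝ^{n×p}, Y ∈ ℝ^n, let ‖·‖ be any norm on ℝ^p, and let β̂ be any minimizer over β ∈ ℝ^p of (1/√n)|Y − Xβ|₂ + ‖β‖. Then for every β* ∈ ℝ^p, writing ε := Y − Xβ*, the following holds: |X(β̂ − β*)|₂² ≤ ⟨Xᵀε, β̂ − β*⟩ + √n·|Y − Xβ̂|₂·‖β̂ − β*‖. In particular, this yields the corresponding inequalities for the Square-Root Lasso (with ‖β‖ = λ|β|₁, the last term being λ√n·|Y − Xβ̂|₂·|β̂ − β*|₁) and for the Square-Root Slope (with ‖β‖ = |β|_*, the sorted l1 norm). -/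
/-!
Put `r = Y - X β̂` and `v = X (β̂ - β*)`, so that `ε = r + v` and the claim reduces to
`-⟪r, v⟫ ≤ √n |r|₂ ‖β̂ - β*‖`. Comparing the objective at `β̂` with its value at
`β̂ - t (β̂ - β*)` and using the triangle inequality for `‖·‖` gives
`|r + t v|₂ ≥ |r|₂ - t √n ‖β̂ - β*‖` for `t > 0`; squaring, dividing by `t` and letting
`t → 0` yields the first-order inequality.
-/

noncomputable section

open Matrix Filter Topology
open scoped InnerProductSpace

lemma l2norm_eq_norm_toLp {m : ℕ} (u : Fin m → ℝ) : l2norm u = ‖WithLp.toLp 2 u‖ := by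
  simp [l2norm, EuclideanSpace.norm_eq]

lemma sq_sub_two_mul_le_sq_of_sub_le {a b x : ℝ} (ha : 0 ≤ a) (h : a - x ≤ b) :
    a ^ 2 - 2 * x * a ≤ b ^ 2 := by
  rcases le_total x a with hxa | hax
  · calc a ^ 2 - 2 * x * a ≤ (a - x) ^ 2 := by nlinarith [sq_nonneg x]
      _ ≤ b ^ 2 := pow_le_pow_left₀ (sub_nonneg.2 hxa) h 2
  · nlinarith

lemma neg_inner_le_of_forall_pos_sub_le_norm_add_smul {E : Type*} [NormedAddCommGroup E]
    [InnerProductSpace ℝ E] {r v : E} {κ : ℝ}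
    (h : ∀ t : ℝ, 0 < t → ‖r‖ - t * κ ≤ ‖r + t • v‖) : -⟪r, v⟫_ℝ ≤ κ * ‖r‖ := by
  have hbound : ∀ t : ℝ, 0 < t → -(κ * ‖r‖) ≤ ⟪r, v⟫_ℝ + t / 2 * ‖v‖ ^ 2 := by
    intro t ht
    have hexp : ‖r + t • v‖ ^ 2 = ‖r‖ ^ 2 + 2 * t * ⟪r, v⟫_ℝ + t ^ 2 * ‖v‖ ^ 2 := by
      rw [norm_add_sq_real, inner_smul_right, norm_smul, mul_pow, Real.norm_eq_abs, sq_abs]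
      ring
    have hsq := sq_sub_two_mul_le_sq_of_sub_le (norm_nonneg r) (h t ht)
    nlinarith
  have hlim : Tendsto (fun t : ℝ => ⟪r, v⟫_ℝ + t / 2 * ‖v‖ ^ 2) (𝓝[>] 0) (𝓝 ⟪r, v⟫_ℝ) := by
    have : Continuous (fun t : ℝ => ⟪r, v⟫_ℝ + t / 2 * ‖v‖ ^ 2) := by fun_prop
    simpa using (this.tendsto 0).mono_left nhdsWithin_le_nhds
  linarith [ge_of_tendsto hlim (eventually_nhdsWithin_of_forall hbound)]

lemma apply_sub_smul_le_add_mul {V : Type*} [AddCommGroup V] [Module ℝ V] {N : V → ℝ}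
    (hNtri : ∀ x y, N (x + y) ≤ N x + N y) (hNhom : ∀ (a : ℝ) x, N (a • x) = |a| * N x)
    (x u : V) {t : ℝ} (ht : 0 ≤ t) : N (x - t • u) ≤ N x + t * N u := by
  calc N (x - t • u) = N (x + (-t) • u) := by rw [neg_smul, sub_eq_add_neg]
    _ ≤ N x + N ((-t) • u) := hNtri _ _
    _ = N x + t * N u := by rw [hNhom, abs_neg, abs_of_nonneg ht]

lemma l2norm_residual_sub_le_of_isMinimizer {n p : ℕ} (X : Matrix (Fin n) (Fin p) ℝ)
    (Y : Fin n → ℝ) {N : (Fin p → ℝ) → ℝ}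
    (hNtri : ∀ x y : Fin p → ℝ, N (x + y) ≤ N x + N y)
    (hNhom : ∀ (a : ℝ) (x : Fin p → ℝ), N (a • x) = |a| * N x)
    {βh : Fin p → ℝ}
    (hmin : ∀ β : Fin p → ℝ,
      (1 / Real.sqrt n) * l2norm (Y - X *ᵥ βh) + N βh
      ≤ (1 / Real.sqrt n) * l2norm (Y - X *ᵥ β) + N β)
    (u : Fin p → ℝ) {t : ℝ} (ht : 0 < t) :
    l2norm (Y - X *ᵥ βh) - t * (Real.sqrt n * N u) ≤ l2norm (Y - X *ᵥ βh + t • X *ᵥ u) := by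
  rcases Nat.eq_zero_or_pos n with rfl | hn
  -- here `1 / √n = 0` makes `hmin` vacuous, but every vector of `ℝ^0` vanishes
  · simp [l2norm]
  have hs : 0 < Real.sqrt n := Real.sqrt_pos.mpr (by exact_mod_cast hn)
  have hres : Y - X *ᵥ (βh - t • u) = Y - X *ᵥ βh + t • X *ᵥ u := by
    rw [mulVec_sub, mulVec_smul]; abel
  have hpen := apply_sub_smul_le_add_mul hNtri hNhom βh u ht.le
  have hobj := hmin (βh - t • u)
  rw [hres] at hobj
  calc l2norm (Y - X *ᵥ βh) - t * (Real.sqrt n * N u)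
      = Real.sqrt n * (1 / Real.sqrt n * l2norm (Y - X *ᵥ βh) - t * N u) := by
        field_simp
    _ ≤ Real.sqrt n * (1 / Real.sqrt n * l2norm (Y - X *ᵥ βh + t • X *ᵥ u)) := by
        gcongr; linarith
    _ = l2norm (Y - X *ᵥ βh + t • X *ᵥ u) := by field_simp

theorem sqrt_estimator_first_order_general (n p : ℕ)
    (X : Matrix (Fin n) (Fin p) ℝ) (Y : Fin n → ℝ)
    (N : (Fin p → ℝ) → ℝ)
    (hNtri : ∀ x y : Fin p → ℝ, N (x + y) ≤ N x + N y)
    (hNhom : ∀ (a : ℝ) (x : Fin p → ℝ), N (a • x) = |a| * N x)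
    (βh : Fin p → ℝ)
    (hmin : ∀ β : Fin p → ℝ,
      (1 / Real.sqrt n) * l2norm (Y - X.mulVec βh) + N βh
      ≤ (1 / Real.sqrt n) * l2norm (Y - X.mulVec β) + N β)
    (βs : Fin p → ℝ) :
    (l2norm (X.mulVec (βh - βs))) ^ 2 ≤
      (∑ j, X.transpose.mulVec (Y - X.mulVec βs) j * (βh j - βs j))
      + Real.sqrt n * l2norm (Y - X.mulVec βh) * N (βh - βs) := by
  set r := Y - X *ᵥ βh
  set v := X *ᵥ (βh - βs)
  have hcross : ∑ j, (Xᵀ *ᵥ (Y - X *ᵥ βs)) j * (βh j - βs j)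
      = ⟪WithLp.toLp 2 r, WithLp.toLp 2 v⟫_ℝ + ‖WithLp.toLp 2 v‖ ^ 2 := by
    have hε : Y - X *ᵥ βs = r + v := by simp only [r, v, mulVec_sub]; abel
    rw [← real_inner_self_eq_norm_sq, ← inner_add_left, ← WithLp.toLp_add, ← hε,
      EuclideanSpace.inner_toLp_toLp, star_trivial, dotProduct_comm, dotProduct_mulVec,
      ← mulVec_transpose]
    rfl
  have hfirst := neg_inner_le_of_forall_pos_sub_le_norm_add_smul (r := WithLp.toLp 2 r)
    (v := WithLp.toLp 2 v) (κ := Real.sqrt n * N (βh - βs)) fun t ht => by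
      rw [← WithLp.toLp_smul, ← WithLp.toLp_add, ← l2norm_eq_norm_toLp, ← l2norm_eq_norm_toLp]
      exact l2norm_residual_sub_le_of_isMinimizer X Y hNtri hNhom hmin (βh - βs) ht
  rw [hcross, l2norm_eq_norm_toLp, l2norm_eq_norm_toLp]
  linarith

/-- Lemmas 6 and 7 (first-order optimality consequence for square-root estimators
penalized by an arbitrary norm `N`, deterministic).  The Square-Root Lasso case
corresponds to `N = λ|·|₁` and the Square-Root Slope case to `N = |·|_*`. -/
theorem sqrt_estimator_first_order (n p : ℕ)
    (X : Matrix (Fin n) (Fin p) ℝ) (Y : Fin n → ℝ)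
    (N : (Fin p → ℝ) → ℝ)
    (hN0 : ∀ x : Fin p → ℝ, N x = 0 ↔ x = 0)
    (hNtri : ∀ x y : Fin p → ℝ, N (x + y) ≤ N x + N y)
    (hNhom : ∀ (a : ℝ) (x : Fin p → ℝ), N (a • x) = |a| * N x)
    (βh : Fin p → ℝ)
    (hmin : ∀ β : Fin p → ℝ,
      (1 / Real.sqrt n) * l2norm (Y - X.mulVec βh) + N βh
      ≤ (1 / Real.sqrt n) * l2norm (Y - X.mulVec β) + N β)
    (βs : Fin p → ℝ) :
    (l2norm (X.mulVec (βh - βs))) ^ 2 ≤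
      (∑ j, X.transpose.mulVec (Y - X.mulVec βs) j * (βh j - βs j))
      + Real.sqrt n * l2norm (Y - X.mulVec βh) * N (βh - βs) :=
  sqrt_estimator_first_order_general n p X Y N hNtri hNhom βh hmin βs

end
end
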